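/- Let E be a real Banach space, let f : E → ℝ be twice continuously differentiable with f(x) > 0 for every x, let q > 0 be a real number, let w ∈ E, and suppose ‖D²f(w)‖ ≤ L. Then the function g(x) = (1/(q+1)) · f(x)^{q+1} (with real-exponent power) is twice differentiable at w and its second derivative satisfies ‖D²g(w)‖ ≤ L · f(w)^q + q · f(w)^{q-1} · ‖Df(w)‖². -/

import Mathlib

/-!
Since `D g = f^q • D f`, the product rule gives
`D² g = f^q • D² f + q f^(q-1) • (D f ⊗ D f)`, and the bound is the triangle inequality
applied to these two terms, using `‖D f ⊗ D f‖ = ‖D f‖²`.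
-/

open Real

theorem norm_iteratedFDeriv_two {𝕜 E F : Type*} [NontriviallyNormedField 𝕜]
    [NormedAddCommGroup E] [NormedSpace 𝕜 E] [NormedAddCommGroup F] [NormedSpace 𝕜 F]
    (f : E → F) (x : E) : ‖iteratedFDeriv 𝕜 2 f x‖ = ‖fderiv 𝕜 (fderiv 𝕜 f) x‖ := by
  rw [← norm_iteratedFDeriv_fderiv (n := 1), ← norm_iteratedFDeriv_fderiv (n := 0),
    norm_iteratedFDeriv_zero]

section

variable {E : Type*} [NormedAddCommGroup E] [NormedSpace ℝ E]

theorem norm_smul_add_smulRight_smul_le {a b : ℝ} (ha : 0 ≤ a) (hb : 0 ≤ b)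
    (A : E →L[ℝ] E →L[ℝ] ℝ) (ℓ : E →L[ℝ] ℝ) :
    ‖a • A + (b • ℓ).smulRight ℓ‖ ≤ a * ‖A‖ + b * ‖ℓ‖ ^ 2 :=
  calc ‖a • A + (b • ℓ).smulRight ℓ‖ ≤ ‖a • A‖ + ‖(b • ℓ).smulRight ℓ‖ :=
        norm_add_le (a • A) ((b • ℓ).smulRight ℓ)
    _ ≤ ‖a‖ * ‖A‖ + ‖b • ℓ‖ * ‖ℓ‖ := by
        rw [ContinuousLinearMap.norm_smulRight_apply]
        exact add_le_add_left (ContinuousLinearMap.opNorm_smul_le a A) _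
    _ = a * ‖A‖ + b * ‖ℓ‖ ^ 2 := by
        rw [norm_smul, Real.norm_of_nonneg ha, Real.norm_of_nonneg hb]
        ring

variable {f : E → ℝ} {x : E} {q : ℝ}

theorem HasFDerivAt.one_div_add_one_mul_rpow_add_one {f' : E →L[ℝ] ℝ}
    (hf : HasFDerivAt f f' x) (hq : q + 1 ≠ 0) (hx : f x ≠ 0) :
    HasFDerivAt (fun y => 1 / (q + 1) * f y ^ (q + 1)) (f x ^ q • f') x := by
  refine ((hf.rpow_const (Or.inl hx)).const_mul (1 / (q + 1))).congr_fderiv ?_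
  rw [smul_smul, add_sub_cancel_right, one_div, inv_mul_cancel_left₀ hq]

theorem fderiv_one_div_add_one_mul_rpow_add_one (hf : Differentiable ℝ f) (hq : q + 1 ≠ 0)
    (hf0 : ∀ y, f y ≠ 0) :
    fderiv ℝ (fun y => 1 / (q + 1) * f y ^ (q + 1)) = fun y => f y ^ q • fderiv ℝ f y :=
  funext fun y => ((hf y).hasFDerivAt.one_div_add_one_mul_rpow_add_one hq (hf0 y)).fderiv

theorem hasFDerivAt_fderiv_one_div_add_one_mul_rpow_add_one (hf : Differentiable ℝ f)
    (hq : q + 1 ≠ 0) (hf0 : ∀ y, f y ≠ 0) {f'' : E →L[ℝ] (E →L[ℝ] ℝ)}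
    (hf'' : HasFDerivAt (fderiv ℝ f) f'' x) :
    HasFDerivAt (fderiv ℝ fun y => 1 / (q + 1) * f y ^ (q + 1))
      (f x ^ q • f'' + ((q * f x ^ (q - 1)) • fderiv ℝ f x).smulRight (fderiv ℝ f x)) x := by
  rw [fderiv_one_div_add_one_mul_rpow_add_one hf hq hf0]
  exact ((hf x).hasFDerivAt.rpow_const (Or.inl (hf0 x))).smul hf''

end

theorem qffl_hessian_bound_rpow_general
    {E : Type*} [NormedAddCommGroup E] [NormedSpace ℝ E]
    (f : E → ℝ) (hf : ContDiff ℝ 2 f) (hf0 : ∀ x, 0 < f x)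
    (q : ℝ) (hq : 0 < q) (w : E) (L : ℝ)
    (hL : ‖iteratedFDeriv ℝ 2 f w‖ ≤ L) :
    DifferentiableAt ℝ (fun x => (1 / (q + 1)) * f x ^ (q + 1)) w ∧
    DifferentiableAt ℝ (fderiv ℝ (fun x => (1 / (q + 1)) * f x ^ (q + 1))) w ∧
    ‖iteratedFDeriv ℝ 2 (fun x => (1 / (q + 1)) * f x ^ (q + 1)) w‖
      ≤ L * f w ^ q + q * f w ^ (q - 1) * ‖fderiv ℝ f w‖ ^ 2 := by
  have hfd : Differentiable ℝ f := hf.differentiable two_ne_zero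
  have hf0' : ∀ x, f x ≠ 0 := fun x => (hf0 x).ne'
  have hq1 : q + 1 ≠ 0 := by positivity
  have hD2f : HasFDerivAt (fderiv ℝ f) (fderiv ℝ (fderiv ℝ f) w) w :=
    ((hf.fderiv_right (m := 1) le_rfl).differentiable one_ne_zero w).hasFDerivAt
  have hD2g := hasFDerivAt_fderiv_one_div_add_one_mul_rpow_add_one hfd hq1 hf0' hD2f
  refine ⟨((hfd w).hasFDerivAt.one_div_add_one_mul_rpow_add_one hq1 (hf0' w)).differentiableAt,
    hD2g.differentiableAt, ?_⟩
  rw [norm_iteratedFDeriv_two] at hL ⊢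
  rw [hD2g.fderiv]
  have hpow : 0 ≤ f w ^ q := rpow_nonneg (hf0 w).le q
  calc _ ≤ f w ^ q * ‖fderiv ℝ (fderiv ℝ f) w‖ + q * f w ^ (q - 1) * ‖fderiv ℝ f w‖ ^ 2 :=
        norm_smul_add_smulRight_smul_le hpow
          (mul_nonneg hq.le (rpow_nonneg (hf0 w).le _)) _ _
    _ ≤ L * f w ^ q + q * f w ^ (q - 1) * ‖fderiv ℝ f w‖ ^ 2 := by
        rw [mul_comm L]; gcongr

/-- Lemma 1 of the paper (real-exponent form): if `f : E → ℝ` is a strictly positive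
`C²` function on a real Banach space whose second derivative at `w` has operator norm
at most `L`, and `q > 0` is real, then `g = (1/(q+1)) · f^{q+1}` (real power) is twice
differentiable at `w` and `‖D²g(w)‖ ≤ L·f(w)^q + q·f(w)^{q-1}·‖Df(w)‖²`. -/
theorem qffl_hessian_bound_rpow
    {E : Type*} [NormedAddCommGroup E] [NormedSpace ℝ E] [CompleteSpace E]
    (f : E → ℝ) (hf : ContDiff ℝ 2 f) (hf0 : ∀ x, 0 < f x)
    (q : ℝ) (hq : 0 < q) (w : E) (L : ℝ)
    (hL : ‖iteratedFDeriv ℝ 2 f w‖ ≤ L) :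
    DifferentiableAt ℝ (fun x => (1 / (q + 1)) * f x ^ (q + 1)) w ∧
    DifferentiableAt ℝ (fderiv ℝ (fun x => (1 / (q + 1)) * f x ^ (q + 1))) w ∧
    ‖iteratedFDeriv ℝ 2 (fun x => (1 / (q + 1)) * f x ^ (q + 1)) w‖
      ≤ L * f w ^ q + q * f w ^ (q - 1) * ‖fderiv ℝ f w‖ ^ 2 :=
  qffl_hessian_bound_rpow_general f hf hf0 q hq w L hL
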